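/- arXiv:0903.3960 — 5 statements merged into one kernel-verified Lean document; each statement's English description precedes it below -/
import Mathlib

section
/- A square matrix A over the max-times semiring is a Kleene star (i.e., equals B* for some B with λ(B) ≤ 1) if and only if A² = A and a_{ii} = 1 for all i. -/
open scoped NNReal

/-- Max-times matrix product. -/
def mmul {n : ℕ} (A B : Matrix (Fin n) (Fin n) ℝ≥0) : Matrix (Fin n) (Fin n) ℝ≥0 :=
  fun i j => Finset.univ.sup (fun k => A i k * B k j)

/-- Max-algebraic identity matrix. -/
def mId {n : ℕ} : Matrix (Fin n) (Fin n) ℝ≥0 :=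
  fun i j => if i = j then 1 else 0

/-- Max-algebraic matrix power. -/
def mpow {n : ℕ} (A : Matrix (Fin n) (Fin n) ℝ≥0) : ℕ → Matrix (Fin n) (Fin n) ℝ≥0
  | 0 => mId
  | k + 1 => mmul (mpow A k) A

/-- Maximum cycle geometric mean, via the trace formula
`λ(A) = ⊕_{k=1}^n (Tr_⊕ A^k)^{1/k}`. -/
noncomputable def lam {n : ℕ} (A : Matrix (Fin n) (Fin n) ℝ≥0) : ℝ≥0 :=
  Finset.sup (Finset.range n) (fun k =>
    (Finset.univ.sup (fun i => mpow A (k + 1) i i)) ^ ((1 : ℝ) / (k + 1)))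

/-- Kleene star `A* = I ⊕ A ⊕ A² ⊕ ... ⊕ A^{n-1}`. -/
def kstar {n : ℕ} (A : Matrix (Fin n) (Fin n) ℝ≥0) : Matrix (Fin n) (Fin n) ℝ≥0 :=
  fun i j => Finset.sup (Finset.range n) (fun k => mpow A k i j)

/-- Max-algebraic action of a matrix on a vector. -/
def mvec {n : ℕ} (A : Matrix (Fin n) (Fin n) ℝ≥0) (x : Fin n → ℝ≥0) : Fin n → ℝ≥0 :=
  fun i => Finset.univ.sup (fun j => A i j * x j)

/- ### Auxiliary lemmas -/

lemma sup_mul_right {α : Type*} (s : Finset α) (f : α → ℝ≥0) (c : ℝ≥0) :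
    (s.sup f) * c = s.sup (fun x => f x * c) :=
  Finset.comp_sup_eq_sup_comp (· * c) (fun x y => (max_mul_mul_right x y c).symm) (by simp)

lemma sup_mul_left {α : Type*} (s : Finset α) (f : α → ℝ≥0) (c : ℝ≥0) :
    c * (s.sup f) = s.sup (fun x => c * f x) :=
  Finset.comp_sup_eq_sup_comp (c * ·) (fun x y => (max_mul_mul_left c x y).symm) (by simp)

lemma mId_mmul {n : ℕ} (A : Matrix (Fin n) (Fin n) ℝ≥0) : mmul mId A = A := by
  funext i j
  show Finset.univ.sup (fun k => mId i k * A k j) = A i j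
  apply le_antisymm
  · apply Finset.sup_le
    intro k _
    by_cases h : i = k
    · subst h; simp [mId]
    · simp [mId, h]
  · have h2 : mId i i = 1 := if_pos rfl
    calc A i j = mId i i * A i j := by rw [h2, one_mul]
      _ ≤ _ := Finset.le_sup (f := fun k => mId i k * A k j) (Finset.mem_univ i)

lemma mmul_mId {n : ℕ} (A : Matrix (Fin n) (Fin n) ℝ≥0) : mmul A mId = A := by
  funext i j
  show Finset.univ.sup (fun k => A i k * mId k j) = A i j
  apply le_antisymm
  · apply Finset.sup_le
    intro k _
    by_cases h : k = j
    · subst h; simp [mId]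
    · simp [mId, h]
  · have h2 : mId j j = 1 := if_pos rfl
    calc A i j = A i j * mId j j := by rw [h2, mul_one]
      _ ≤ _ := Finset.le_sup (f := fun k => A i k * mId k j) (Finset.mem_univ j)

lemma mmul_assoc {n : ℕ} (A B C : Matrix (Fin n) (Fin n) ℝ≥0) :
    mmul (mmul A B) C = mmul A (mmul B C) := by
  funext i j
  show Finset.univ.sup (fun l => (Finset.univ.sup fun k => A i k * B k l) * C l j)
      = Finset.univ.sup (fun k => A i k * Finset.univ.sup (fun l => B k l * C l j))
  simp only [sup_mul_right, sup_mul_left]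
  rw [Finset.sup_comm]
  simp [mul_assoc]

lemma mpow_one {n : ℕ} (A : Matrix (Fin n) (Fin n) ℝ≥0) : mpow A 1 = A := by
  show mmul mId A = A
  exact mId_mmul A

lemma mpow_add {n : ℕ} (A : Matrix (Fin n) (Fin n) ℝ≥0) (a b : ℕ) :
    mpow A (a + b) = mmul (mpow A a) (mpow A b) := by
  induction b with
  | zero => exact (mmul_mId (mpow A a)).symm
  | succ b ih =>
    show mmul (mpow A (a + b)) A = mmul (mpow A a) (mmul (mpow A b) A)
    rw [ih, mmul_assoc]

/-- Path weight lower bound: any concrete path weight is a lower bound for `mpow`. -/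
lemma pathProd_le_mpow {n : ℕ} (B : Matrix (Fin n) (Fin n) ℝ≥0) (p : ℕ) (v : ℕ → Fin n) :
    (Finset.range p).prod (fun t => B (v t) (v (t + 1))) ≤ mpow B p (v 0) (v p) := by
  induction p with
  | zero => simp [mpow, mId]
  | succ p ih =>
    rw [Finset.prod_range_succ]
    calc (Finset.range p).prod (fun t => B (v t) (v (t + 1))) * B (v p) (v (p + 1))
        ≤ mpow B p (v 0) (v p) * B (v p) (v (p + 1)) := mul_le_mul_left ih _
      _ ≤ mpow B (p + 1) (v 0) (v (p + 1)) :=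
          Finset.le_sup (f := fun k => mpow B p (v 0) k * B k (v (p + 1))) (Finset.mem_univ (v p))

/-- `mpow B (p+1) i j` is attained by some path. -/
lemma exists_path {n : ℕ} (B : Matrix (Fin n) (Fin n) ℝ≥0) (p : ℕ) (i j : Fin n) :
    ∃ v : ℕ → Fin n, v 0 = i ∧ v (p + 1) = j ∧
      mpow B (p + 1) i j = (Finset.range (p + 1)).prod (fun t => B (v t) (v (t + 1))) := by
  induction p generalizing j with
  | zero =>
    refine ⟨fun t => if t = 0 then i else j, rfl, rfl, ?_⟩
    rw [mpow_one]
    simp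
  | succ p ih =>
    have hne : (Finset.univ : Finset (Fin n)).Nonempty := ⟨i, Finset.mem_univ i⟩
    obtain ⟨k, -, hk⟩ := Finset.exists_mem_eq_sup Finset.univ hne
      (fun k => mpow B (p + 1) i k * B k j)
    obtain ⟨v, hv0, hvp, hvprod⟩ := ih k
    refine ⟨fun t => if t ≤ p + 1 then v t else j, by simpa using hv0, by simp, ?_⟩
    have hstep : mpow B (p + 1 + 1) i j = mpow B (p + 1) i k * B k j := hk
    rw [hstep, Finset.prod_range_succ]
    have h1 : ∀ t ∈ Finset.range (p + 1),
        B ((fun t => if t ≤ p + 1 then v t else j) t)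
          ((fun t => if t ≤ p + 1 then v t else j) (t + 1)) = B (v t) (v (t + 1)) := by
      intro t ht
      have ht' : t < p + 1 := Finset.mem_range.mp ht
      simp [Nat.le_of_lt ht', Nat.succ_le_of_lt ht']
    rw [Finset.prod_congr rfl h1, ← hvprod]
    simp [hvp]

/-- Cycle power traces are at most 1 when `lam B ≤ 1`. -/
lemma trace_le_one {n : ℕ} (B : Matrix (Fin n) (Fin n) ℝ≥0) (hB : lam B ≤ 1)
    {b : ℕ} (hb1 : 1 ≤ b) (hbn : b ≤ n) (v : Fin n) : mpow B b v v ≤ 1 := by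
  obtain ⟨k, rfl⟩ := Nat.exists_eq_add_of_le hb1
  have hk : k ∈ Finset.range n := Finset.mem_range.mpr (by omega)
  have hmem := Finset.le_sup (s := Finset.range n) (f := fun k : ℕ =>
      (Finset.univ.sup (fun i => mpow B (k + 1) i i)) ^ ((1 : ℝ) / (k + 1))) hk
  have h1 : (Finset.univ.sup (fun i => mpow B (k + 1) i i)) ^ ((1 : ℝ) / (k + 1)) ≤ 1 :=
    le_trans hmem hB
  have h2 : Finset.univ.sup (fun i => mpow B (k + 1) i i) ≤ 1 := by
    by_contra hx
    push_neg at hx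
    have := NNReal.one_lt_rpow hx (by positivity : (0:ℝ) < 1 / (k + 1))
    exact absurd h1 (not_le.mpr this)
  have h3 : mpow B (1 + k) v v ≤ Finset.univ.sup (fun i => mpow B (k + 1) i i) := by
    rw [Nat.add_comm 1 k]
    exact Finset.le_sup (f := fun i => mpow B (k + 1) i i) (Finset.mem_univ v)
  exact le_trans h3 h2

/-- The key path-splitting lemma: `mpow B n ≤ kstar B` entrywise. -/
lemma mpow_n_le_kstar {n : ℕ} (B : Matrix (Fin n) (Fin n) ℝ≥0) (hB : lam B ≤ 1)
    (i j : Fin n) : mpow B n i j ≤ kstar B i j := by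
  have hn : 0 < n := i.pos
  obtain ⟨m, rfl⟩ : ∃ m, n = m + 1 := ⟨n - 1, by omega⟩
  obtain ⟨v, hv0, hvn, hvprod⟩ := exists_path B m i j
  set f : ℕ → ℝ≥0 := fun t => B (v t) (v (t + 1)) with hf
  -- pigeonhole on v : Fin (m+2) → Fin (m+1)
  have hni : ¬ Function.Injective (fun t : Fin (m + 2) => v t.val) := by
    intro hinj
    have := Fintype.card_le_of_injective _ hinj
    simp at this
  rw [Function.not_injective_iff] at hni
  obtain ⟨s, t, hst, hnet⟩ := hni
  obtain ⟨a, c, hac, hvac, hcn⟩ : ∃ a c : ℕ, a < c ∧ v a = v c ∧ c ≤ m + 1 := by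
    rcases lt_or_gt_of_ne (fun h => hnet (by simpa using Fin.ext h : s = t)) with h | h
    · exact ⟨s, t, h, hst, by omega⟩
    · exact ⟨t, s, h, hst.symm, by omega⟩
  set b := c - a with hb
  have hb1 : 1 ≤ b := by omega
  have hcab : c = a + b := by omega
  have hvab : v (a + b) = v a := by rw [← hcab, ← hvac]
  -- spliced path
  set u : ℕ → Fin (m+1) := fun t => if t < a then v t else v (t + b) with hu
  set g : ℕ → ℝ≥0 := fun t =>
    B (v (if t < a then t else t + b)) (v (if t + 1 ≤ a then t + 1 else t + 1 + b)) with hg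
  have hu0 : u 0 = i := by
    by_cases h : 0 < a
    · simpa [hu, h] using hv0
    · have ha0 : a = 0 := by omega
      have h1 : u 0 = v c := by simp [hu, ha0, hcab]
      rw [h1, ← hvac, ha0, hv0]
  have hulast : u (m + 1 - b) = j := by
    have h1 : ¬ (m + 1 - b < a) := by omega
    have h2 : m + 1 - b + b = m + 1 := by omega
    simp only [hu, h1, if_false, h2]
    exact hvn
  -- step compatibility
  have hustep : ∀ t ∈ Finset.range (m + 1 - b), B (u t) (u (t + 1)) = g t := by
    intro t ht
    by_cases h : t < a
    · by_cases h' : t + 1 < a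
      · simp [hu, hg, h, h', Nat.le_of_lt h']
      · have heq : t + 1 = a := by omega
        simp [hu, hg, h, h', heq, hvab, Nat.le_of_eq heq]
    · have h' : ¬ (t + 1 < a) := by omega
      have h'' : ¬ (t + 1 ≤ a) := by omega
      simp [hu, hg, h, h', h'']
  -- split the original product
  have hsplit1 := Finset.prod_range_mul_prod_Ico f (Nat.le_of_lt hac)
  have hsplit2 := Finset.prod_range_mul_prod_Ico f hcn
  have hsplit : (Finset.range (m + 1)).prod f
      = ((Finset.range a).prod f) * ((Finset.Ico a c).prod f)
        * ((Finset.Ico c (m + 1)).prod f) := by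
    rw [← hsplit2, ← hsplit1]
  -- the middle part is a cycle of length b at v a, weight ≤ 1
  have heq : (Finset.Ico a c).prod f
      = (Finset.range b).prod (fun s => B (v (a + s)) (v (a + (s + 1)))) := by
    rw [Finset.prod_Ico_eq_prod_range]
    apply Finset.prod_congr (by rw [hb])
    intro t _
    show B (v (a + t)) (v (a + t + 1)) = B (v (a + t)) (v (a + (t + 1)))
    rw [Nat.add_assoc]
  have hcyc : (Finset.Ico a c).prod f ≤ 1 := by
    rw [heq]
    have h2 := pathProd_le_mpow B b (fun s => v (a + s))
    simp only [Nat.add_zero] at h2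
    rw [hvab] at h2
    exact le_trans h2 (trace_le_one B hB hb1 (by omega) (v a))
  -- the outer parts form a path of length m+1-b
  have hasub : a ≤ m + 1 - b := by omega
  have hpart1 : (Finset.range a).prod g = (Finset.range a).prod f := by
    apply Finset.prod_congr rfl
    intro t ht
    have ht' : t < a := Finset.mem_range.mp ht
    simp [hg, hf, ht', Nat.succ_le_of_lt ht']
  have hpart2 : (Finset.Ico a (m + 1 - b)).prod g = (Finset.Ico c (m + 1)).prod f := by
    rw [Finset.prod_Ico_eq_prod_range, Finset.prod_Ico_eq_prod_range]
    have hlen : m + 1 - b - a = m + 1 - c := by omega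
    rw [hlen]
    apply Finset.prod_congr rfl
    intro t _
    have h1 : ¬ (a + t < a) := by omega
    have h2 : ¬ (a + t + 1 ≤ a) := by omega
    have h3 : a + t + b = c + t := by omega
    have h4 : a + t + 1 + b = c + t + 1 := by omega
    show B (v (if a + t < a then a + t else a + t + b))
        (v (if a + t + 1 ≤ a then a + t + 1 else a + t + 1 + b)) = B (v (c + t)) (v (c + t + 1))
    simp only [h1, if_false, h2, h3, h4]
  have houter : ((Finset.range a).prod f) * ((Finset.Ico c (m + 1)).prod f)
      ≤ mpow B (m + 1 - b) i j := by
    have hpath := pathProd_le_mpow B (m + 1 - b) u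
    rw [hu0, hulast] at hpath
    calc ((Finset.range a).prod f) * ((Finset.Ico c (m + 1)).prod f)
        = ((Finset.range a).prod g) * ((Finset.Ico a (m + 1 - b)).prod g) := by
          rw [hpart1, hpart2]
      _ = (Finset.range (m + 1 - b)).prod g := Finset.prod_range_mul_prod_Ico g hasub
      _ = (Finset.range (m + 1 - b)).prod (fun t => B (u t) (u (t + 1))) :=
          (Finset.prod_congr rfl hustep).symm
      _ ≤ mpow B (m + 1 - b) i j := hpath
  -- put it together
  have hle : mpow B (m + 1) i j ≤ mpow B (m + 1 - b) i j := by
    rw [hvprod]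
    show (Finset.range (m + 1)).prod f ≤ _
    rw [hsplit]
    calc ((Finset.range a).prod f) * ((Finset.Ico a c).prod f) * ((Finset.Ico c (m + 1)).prod f)
        ≤ ((Finset.range a).prod f) * 1 * ((Finset.Ico c (m + 1)).prod f) :=
          mul_le_mul_left (mul_le_mul_right hcyc _) _
      _ = ((Finset.range a).prod f) * ((Finset.Ico c (m + 1)).prod f) := by ring
      _ ≤ mpow B (m + 1 - b) i j := houter
  refine le_trans hle ?_
  exact Finset.le_sup (f := fun k => mpow B k i j) (Finset.mem_range.mpr (by omega))

/-- All powers are dominated by the Kleene star when `lam B ≤ 1`. -/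
lemma mpow_le_kstar {n : ℕ} (B : Matrix (Fin n) (Fin n) ℝ≥0) (hB : lam B ≤ 1)
    (p : ℕ) (i j : Fin n) : mpow B p i j ≤ kstar B i j := by
  have hn : 0 < n := i.pos
  induction p using Nat.strong_induction_on generalizing i j with
  | _ p ih =>
  rcases lt_trichotomy p n with h | h | h
  · exact Finset.le_sup (f := fun k => mpow B k i j) (Finset.mem_range.mpr h)
  · subst h; exact mpow_n_le_kstar B hB i j
  · obtain ⟨q, rfl⟩ : ∃ q, p = q + 1 := ⟨p - 1, by omega⟩
    show Finset.univ.sup (fun k => mpow B q i k * B k j) ≤ kstar B i j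
    apply Finset.sup_le
    intro k _
    have h1 : mpow B q i k ≤ kstar B i k := ih q (by omega) i k
    calc mpow B q i k * B k j ≤ kstar B i k * B k j := mul_le_mul_left h1 _
      _ = Finset.sup (Finset.range n) (fun l => mpow B l i k * B k j) :=
          sup_mul_right (Finset.range n) (fun l => mpow B l i k) (B k j)
      _ ≤ kstar B i j := by
          apply Finset.sup_le
          intro l hl
          have hl' : l < n := Finset.mem_range.mp hl
          have hstep : mpow B l i k * B k j ≤ mpow B (l + 1) i j :=
            Finset.le_sup (f := fun k => mpow B l i k * B k j) (Finset.mem_univ k)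
          exact le_trans hstep (ih (l + 1) (by omega) i j)

/-- A is a Kleene star (i.e. A = B* for some B with λ(B) ≤ 1) iff A² = A and
all diagonal entries of A equal 1. -/
theorem isKleeneStar_iff {n : ℕ} (A : Matrix (Fin n) (Fin n) ℝ≥0) :
    (∃ B : Matrix (Fin n) (Fin n) ℝ≥0, lam B ≤ 1 ∧ A = kstar B) ↔
      (mmul A A = A ∧ ∀ i, A i i = 1) := by
  constructor
  · rintro ⟨B, hB, rfl⟩
    have hdiag : ∀ i, kstar B i i = 1 := by
      intro i
      have hn : 0 < n := i.pos
      apply le_antisymm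
      · apply Finset.sup_le
        intro k hk
        have hkn : k < n := Finset.mem_range.mp hk
        cases k with
        | zero => simp [mpow, mId]
        | succ k => exact trace_le_one B hB (by omega) (by omega) i
      · have h1 : mpow B 0 i i ≤ kstar B i i :=
          Finset.le_sup (f := fun k => mpow B k i i) (Finset.mem_range.mpr hn)
        simpa [mpow, mId] using h1
    constructor
    · funext i j
      apply le_antisymm
      · apply Finset.sup_le
        intro m _
        calc kstar B i m * kstar B m j
            = Finset.sup (Finset.range n) (fun k => mpow B k i m * kstar B m j) :=
              sup_mul_right (Finset.range n) (fun k => mpow B k i m) (kstar B m j)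
          _ ≤ kstar B i j := by
              apply Finset.sup_le
              intro k _
              calc mpow B k i m * kstar B m j
                  = Finset.sup (Finset.range n) (fun l => mpow B k i m * mpow B l m j) :=
                    sup_mul_left (Finset.range n) (fun l => mpow B l m j) (mpow B k i m)
                _ ≤ kstar B i j := by
                    apply Finset.sup_le
                    intro l _
                    have h1 : mpow B k i m * mpow B l m j ≤ mpow B (k + l) i j := by
                      rw [mpow_add]
                      exact Finset.le_sup (f := fun m => mpow B k i m * mpow B l m j)
                        (Finset.mem_univ m)
                    exact le_trans h1 (mpow_le_kstar B hB (k + l) i j)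
      · have h1 : kstar B i i * kstar B i j ≤ mmul (kstar B) (kstar B) i j :=
          Finset.le_sup (f := fun m => kstar B i m * kstar B m j) (Finset.mem_univ i)
        rw [hdiag i, one_mul] at h1
        exact h1
    · exact hdiag
  · rintro ⟨hidem, hdiag⟩
    have hpow : ∀ k, mpow A (k + 1) = A := by
      intro k
      induction k with
      | zero => exact mpow_one A
      | succ k ih => show mmul (mpow A (k + 1)) A = A; rw [ih, hidem]
    refine ⟨A, ?_, ?_⟩
    · unfold lam
      apply Finset.sup_le
      intro k hk
      have hn : 0 < n := lt_of_le_of_lt (Nat.zero_le k) (Finset.mem_range.mp hk)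
      have htr : Finset.univ.sup (fun i => mpow A (k + 1) i i) = 1 := by
        rw [hpow k]
        apply le_antisymm
        · exact Finset.sup_le fun i _ => le_of_eq (hdiag i)
        · obtain ⟨i⟩ : Nonempty (Fin n) := ⟨⟨0, hn⟩⟩
          calc (1 : ℝ≥0) = A i i := (hdiag i).symm
            _ ≤ Finset.univ.sup (fun i => A i i) :=
                Finset.le_sup (f := fun i => A i i) (Finset.mem_univ i)
      rw [htr, NNReal.one_rpow]
    · funext i j
      have hn : 0 < n := i.pos
      apply le_antisymm
      · rcases Nat.lt_or_ge 1 n with h | h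
        · have h1 : mpow A 1 i j ≤ kstar A i j :=
            Finset.le_sup (f := fun k => mpow A k i j) (Finset.mem_range.mpr h)
          rwa [mpow_one] at h1
        · have hn1 : n = 1 := by omega
          have hij : i = j := by subst hn1; exact Subsingleton.elim i j
          subst hij
          rw [hdiag i]
          have h1 : mpow A 0 i i ≤ kstar A i i :=
            Finset.le_sup (f := fun k => mpow A k i i) (Finset.mem_range.mpr hn)
          simpa [mpow, mId] using h1
      · apply Finset.sup_le
        intro k _
        cases k with
        | zero =>
          show mId i j ≤ A i j
          by_cases h : i = j
          · subst h; simp [mId, hdiag i]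
          · simp [mId, h]
        | succ k => rw [hpow k]
end

section
/- Let A be an n×n definite matrix over the max-times semiring (λ(A) = 1), and let x = ⊕_{i=1}^n A*_{·i} be the max of all columns of the Kleene star A*. Then x is positive and the scaled matrix with entries x_i⁻¹ a_{ij} x_j has all entries ≤ 1. -/
open scoped NNReal

namespace Vis

lemma sup_mul_right {α : Type*} (s : Finset α) (f : α → ℝ≥0) (a : ℝ≥0) :
    s.sup f * a = s.sup fun x => f x * a := by
  induction s using Finset.cons_induction with
  | empty => simp
  | cons x s hx ih =>
    rw [Finset.sup_cons, Finset.sup_cons, ← ih]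
    rcases le_total (f x) (s.sup f) with h | h
    · rw [sup_eq_right.2 h, sup_eq_right.2 (mul_le_mul_left h a)]
    · rw [sup_eq_left.2 h, sup_eq_left.2 (mul_le_mul_left h a)]

lemma sup_mul_left {α : Type*} (s : Finset α) (f : α → ℝ≥0) (a : ℝ≥0) :
    a * s.sup f = s.sup fun x => a * f x := by
  rw [mul_comm, sup_mul_right]
  simp [mul_comm]

lemma mmul_assoc {n : ℕ} (A B C : Matrix (Fin n) (Fin n) ℝ≥0) :
    mmul (mmul A B) C = mmul A (mmul B C) := by
  funext i j
  show Finset.univ.sup (fun k => (Finset.univ.sup fun l => A i l * B l k) * C k j)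
      = Finset.univ.sup (fun l => A i l * Finset.univ.sup fun k => B l k * C k j)
  simp only [sup_mul_right, sup_mul_left, mul_assoc]
  exact Finset.sup_comm _ _ _

lemma mmul_id {n : ℕ} (A : Matrix (Fin n) (Fin n) ℝ≥0) : mmul A mId = A := by
  funext i j
  apply le_antisymm
  · apply Finset.sup_le; intro k _
    rcases eq_or_ne k j with rfl | h
    · simp [mId]
    · simp [mId, h]
  · calc A i j = A i j * mId j j := by simp [mId]
      _ ≤ _ := Finset.le_sup (f := fun k => A i k * mId k j) (Finset.mem_univ j)

lemma id_mmul {n : ℕ} (A : Matrix (Fin n) (Fin n) ℝ≥0) : mmul mId A = A := by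
  funext i j
  apply le_antisymm
  · apply Finset.sup_le; intro k _
    rcases eq_or_ne i k with rfl | h
    · simp [mId]
    · simp [mId, h]
  · calc A i j = mId i i * A i j := by simp [mId]
      _ ≤ _ := Finset.le_sup (f := fun k => mId i k * A k j) (Finset.mem_univ i)

lemma mpow_succ_left {n : ℕ} (A : Matrix (Fin n) (Fin n) ℝ≥0) (k : ℕ) :
    mpow A (k + 1) = mmul A (mpow A k) := by
  induction k with
  | zero => show mmul mId A = mmul A mId; rw [mmul_id, id_mmul]
  | succ k ih =>
    show mmul (mpow A (k + 1)) A = mmul A (mmul (mpow A k) A)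
    rw [ih, mmul_assoc]

/-- Weight of a path of length `m`. -/
noncomputable def weight {n : ℕ} (A : Matrix (Fin n) (Fin n) ℝ≥0) (m : ℕ) (p : ℕ → Fin n) : ℝ≥0 :=
  ∏ k ∈ Finset.range m, A (p k) (p (k + 1))

lemma weight_le {n : ℕ} (A : Matrix (Fin n) (Fin n) ℝ≥0) (m : ℕ) (p : ℕ → Fin n) :
    weight A m p ≤ mpow A m (p 0) (p m) := by
  induction m with
  | zero => simp [weight, mpow, mId]
  | succ m ih =>
    rw [weight, Finset.prod_range_succ]
    have h1 : (∏ k ∈ Finset.range m, A (p k) (p (k + 1))) * A (p m) (p (m + 1))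
        ≤ mpow A m (p 0) (p m) * A (p m) (p (m + 1)) := mul_le_mul_left ih _
    refine h1.trans ?_
    exact Finset.le_sup (f := fun k => mpow A m (p 0) k * A k (p (m + 1)))
      (Finset.mem_univ (p m))

lemma exists_path {n : ℕ} (A : Matrix (Fin n) (Fin n) ℝ≥0) (m : ℕ) (i j : Fin n) :
    mpow A m i j = 0 ∨
      ∃ p : ℕ → Fin n, p 0 = i ∧ p m = j ∧ weight A m p = mpow A m i j := by
  induction m generalizing j with
  | zero =>
    rcases eq_or_ne i j with rfl | h
    · exact Or.inr ⟨fun _ => i, rfl, rfl, by simp [weight, mpow, mId]⟩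
    · exact Or.inl (by simp [mpow, mId, h])
  | succ m ih =>
    have hne : (Finset.univ : Finset (Fin n)).Nonempty := ⟨i, Finset.mem_univ i⟩
    obtain ⟨k, -, hk⟩ := Finset.exists_mem_eq_sup Finset.univ hne
      (fun k => mpow A m i k * A k j)
    have heq : mpow A (m + 1) i j = mpow A m i k * A k j := hk
    rcases ih k with h0 | ⟨p, hp0, hpm, hpw⟩
    · exact Or.inl (by rw [heq, h0, zero_mul])
    · refine Or.inr ⟨fun t => if t ≤ m then p t else j, by simp [hp0], by simp, ?_⟩
      rw [heq, ← hpw, weight, weight, Finset.prod_range_succ]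
      congr 1
      · refine Finset.prod_congr rfl fun t ht => ?_
        rw [Finset.mem_range] at ht
        have h1 : t ≤ m := by omega
        have h2 : t + 1 ≤ m := ht
        simp [h1, h2]
      · have h2 : ¬ (m + 1 ≤ m) := by omega
        simp [h2, hpm]

lemma diag_le_one {n : ℕ} (A : Matrix (Fin n) (Fin n) ℝ≥0) (hA : lam A = 1)
    {d : ℕ} (hd1 : 1 ≤ d) (hdn : d ≤ n) (i : Fin n) : mpow A d i i ≤ 1 := by
  have hk : d - 1 ∈ Finset.range n := Finset.mem_range.2 (by omega)
  have h := Finset.le_sup (f := fun k =>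
    (Finset.univ.sup (fun i => mpow A (k + 1) i i)) ^ ((1 : ℝ) / (k + 1))) hk
  rw [show lam A = Finset.sup (Finset.range n) (fun k =>
    (Finset.univ.sup (fun i => mpow A (k + 1) i i)) ^ ((1 : ℝ) / (k + 1))) from rfl] at hA
  rw [hA] at h
  set c : ℝ := (1 : ℝ) / ((d - 1 : ℕ) + 1) with hc
  have hcpos : 0 < c := by positivity
  set t : ℝ≥0 := Finset.univ.sup (fun i => mpow A (d - 1 + 1) i i) with ht
  have h1 : t ≤ 1 := by
    have h2 : (t ^ c) ^ c⁻¹ ≤ (1 : ℝ≥0) ^ c⁻¹ :=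
      NNReal.rpow_le_rpow h (le_of_lt (inv_pos.2 hcpos))
    rwa [← NNReal.rpow_mul, mul_inv_cancel₀ (ne_of_gt hcpos), NNReal.rpow_one,
      NNReal.one_rpow] at h2
  have h3 : mpow A (d - 1 + 1) i i ≤ t :=
    Finset.le_sup (f := fun j => mpow A (d - 1 + 1) j j) (Finset.mem_univ i)
  rw [show d - 1 + 1 = d by omega] at h3
  exact h3.trans h1

lemma mpow_n_le_kstar {n : ℕ} (A : Matrix (Fin n) (Fin n) ℝ≥0) (hA : lam A = 1)
    (i j : Fin n) : mpow A n i j ≤ kstar A i j := by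
  have hn : 0 < n := i.pos
  rcases exists_path A n i j with h0 | ⟨p, hp0, hpn, hw⟩
  · simp [h0]
  · have main : ∀ a b : ℕ, a < b → b ≤ n → p a = p b →
        weight A n p ≤ kstar A i j := by
      intro a b hab hbn hpe
      set d := b - a with hd
      have hd1 : 1 ≤ d := by omega
      have hadb : a + d = b := by omega
      -- the shortened path
      set r : ℕ → Fin n := fun k => if k < a then p k else p (k + d) with hr
      have hra : ∀ k ≤ a, r k = p k := by
        intro k hk
        rcases lt_or_eq_of_le hk with h | h
        · simp [hr, h]
        · subst h
          simp only [hr, lt_irrefl, if_neg (lt_irrefl k)]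
          rw [show k + d = b by omega, ← hpe]
      have hrb : ∀ k, a ≤ k → r k = p (k + d) := by
        intro k hk
        rcases lt_or_eq_of_le hk with h | h
        · simp [hr, not_lt.2 (le_of_lt h)]
        · subst h
          simp [hr]
      set f : ℕ → ℝ≥0 := fun k => A (p k) (p (k + 1)) with hf
      -- decompose weight p
      have hsplit : weight A n p =
          (∏ k ∈ Finset.range a, f k) * (∏ k ∈ Finset.range d, f (a + k)) *
            (∏ k ∈ Finset.range (n - b), f (a + d + k)) := by
        conv_lhs => rw [weight]; rw [show n = a + d + (n - b) from by omega]
        rw [Finset.prod_range_add, Finset.prod_range_add]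
      -- the cycle has weight ≤ 1
      have hcyc : (∏ k ∈ Finset.range d, f (a + k)) ≤ 1 := by
        have h1 : (∏ k ∈ Finset.range d, f (a + k))
            ≤ mpow A d (p a) (p (a + d)) := by
          have := weight_le A d (fun k => p (k + a))
          simp only [weight] at this
          calc (∏ k ∈ Finset.range d, f (a + k))
              = ∏ k ∈ Finset.range d, A (p (k + a)) (p (k + 1 + a)) := by
                refine Finset.prod_congr rfl fun k _ => ?_
                simp only [hf]
                rw [show a + k = k + a from by omega,
                  show k + a + 1 = k + 1 + a from by omega]
            _ ≤ mpow A d (p (0 + a)) (p (d + a)) := this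
            _ = mpow A d (p a) (p (a + d)) := by rw [zero_add, Nat.add_comm d a]
        rw [hadb, ← hpe] at h1
        exact h1.trans (diag_le_one A hA hd1 (by omega) (p a))
      -- weight of the shortened path
      have hwr : weight A (n - d) r =
          (∏ k ∈ Finset.range a, f k) * (∏ k ∈ Finset.range (n - b), f (a + d + k)) := by
        conv_lhs => rw [weight]; rw [show n - d = a + (n - b) from by omega]
        rw [Finset.prod_range_add]
        congr 1
        · refine Finset.prod_congr rfl fun k hk => ?_
          rw [Finset.mem_range] at hk
          rw [hra k (by omega), hra (k + 1) (by omega)]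
        · refine Finset.prod_congr rfl fun k _ => ?_
          rw [hrb (a + k) (by omega), hrb (a + k + 1) (by omega)]
          simp only [hf]
          rw [show a + k + d = a + d + k from by omega,
            show a + k + 1 + d = a + d + k + 1 from by omega]
      have hends : r 0 = i ∧ r (n - d) = j := by
        constructor
        · rw [hra 0 (by omega), hp0]
        · rw [hrb (n - d) (by omega), show n - d + d = n by omega, hpn]
      have h2 : weight A n p ≤ weight A (n - d) r := by
        rw [hsplit, hwr]
        calc (∏ k ∈ Finset.range a, f k) * (∏ k ∈ Finset.range d, f (a + k)) *
              (∏ k ∈ Finset.range (n - b), f (a + d + k))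
            ≤ (∏ k ∈ Finset.range a, f k) * 1 *
              (∏ k ∈ Finset.range (n - b), f (a + d + k)) := by
              exact mul_le_mul_left (mul_le_mul_right hcyc _) _
          _ = _ := by rw [mul_one]
      have h3 : weight A (n - d) r ≤ mpow A (n - d) i j := by
        have := weight_le A (n - d) r
        rwa [hends.1, hends.2] at this
      have h4 : mpow A (n - d) i j ≤ kstar A i j :=
        Finset.le_sup (f := fun k => mpow A k i j) (Finset.mem_range.2 (by omega))
      exact h2.trans (h3.trans h4)
    -- pigeonhole
    have hni : ¬ Function.Injective (fun t : Fin (n + 1) => p t.val) := by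
      intro hinj
      have := Fintype.card_le_of_injective _ hinj
      simp at this
    rw [Function.not_injective_iff] at hni
    obtain ⟨a, b, hpe, hab⟩ := hni
    rw [← hw]
    rcases lt_or_gt_of_ne hab with h | h
    · exact main a.val b.val h b.is_le hpe
    · exact main b.val a.val h a.is_le hpe.symm

lemma mpow_le_kstar {n : ℕ} (A : Matrix (Fin n) (Fin n) ℝ≥0) (hA : lam A = 1)
    {m : ℕ} (hm : m ≤ n) (i j : Fin n) : mpow A m i j ≤ kstar A i j := by
  rcases lt_or_eq_of_le hm with h | h
  · exact Finset.le_sup (f := fun k => mpow A k i j) (Finset.mem_range.2 h)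
  · subst h; exact mpow_n_le_kstar A hA i j

end Vis

/-- For a definite matrix A, the vector x = ⊕ᵢ A*_{·i} (the max of all columns of
the Kleene star) is positive and the scaled matrix x_i⁻¹ a_{ij} x_j is visualized,
i.e. has all entries at most 1. -/
theorem visualization_exists {n : ℕ} (A : Matrix (Fin n) (Fin n) ℝ≥0)
    (hA : lam A = 1) :
    let x : Fin n → ℝ≥0 := fun i => Finset.univ.sup (fun j => kstar A i j)
    (∀ i, 0 < x i) ∧ ∀ i j, (x i)⁻¹ * A i j * x j ≤ 1 := by
  intro x
  have hx1 : ∀ i, (1 : ℝ≥0) ≤ x i := by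
    intro i
    have hn : 0 < n := i.pos
    have h1 : mpow A 0 i i ≤ kstar A i i :=
      Finset.le_sup (f := fun k => mpow A k i i) (Finset.mem_range.2 hn)
    have h2 : kstar A i i ≤ x i := Finset.le_sup (Finset.mem_univ i)
    calc (1 : ℝ≥0) = mpow A 0 i i := by simp [mpow, mId]
      _ ≤ kstar A i i := h1
      _ ≤ x i := h2
  refine ⟨fun i => lt_of_lt_of_le one_pos (hx1 i), fun i j => ?_⟩
  have key : A i j * x j ≤ x i := by
    show A i j * Finset.univ.sup (fun l => kstar A j l) ≤ x i
    rw [Vis.sup_mul_left]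
    apply Finset.sup_le
    intro l _
    show A i j * Finset.sup (Finset.range n) (fun k => mpow A k j l) ≤ x i
    rw [Vis.sup_mul_left]
    apply Finset.sup_le
    intro k hk
    rw [Finset.mem_range] at hk
    have h1 : A i j * mpow A k j l ≤ mpow A (k + 1) i l := by
      rw [Vis.mpow_succ_left]
      exact Finset.le_sup (f := fun m => A i m * mpow A k m l) (Finset.mem_univ j)
    have h2 : mpow A (k + 1) i l ≤ kstar A i l := Vis.mpow_le_kstar A hA (by omega) i l
    have h3 : kstar A i l ≤ x i := Finset.le_sup (Finset.mem_univ l)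
    exact h1.trans (h2.trans h3)
  have hxne : x i ≠ 0 := (lt_of_lt_of_le one_pos (hx1 i)).ne'
  rw [mul_assoc]
  calc (x i)⁻¹ * (A i j * x j) ≤ (x i)⁻¹ * x i := mul_le_mul_right key _
    _ = 1 := inv_mul_cancel₀ hxne
end

section
/- Let A be an m×n rectangular circulant matrix and d = gcd(m, n). Then A is d-periodic: a_{ij} = a_{is} whenever (s − j) mod n is a multiple of d, and a_{ji} = a_{si} whenever (s − j) mod m is a multiple of d. -/
/-- Key CRT-style lemma via Bézout: if gcd m n ∣ c and c < n, there is a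
natural number t with t ≡ 0 (mod m) and t ≡ c (mod n). -/
lemma rectCirculant_key (m n c : ℕ) [NeZero m] [NeZero n]
    (hdvd : Nat.gcd m n ∣ c) (hc : c < n) : ∃ t : ℕ, t % m = 0 ∧ t % n = c := by
  have hm : 0 < m := Nat.pos_of_ne_zero (NeZero.ne m)
  have hn : 0 < n := Nat.pos_of_ne_zero (NeZero.ne n)
  obtain ⟨k, hk⟩ := hdvd
  have hg : (Nat.gcd m n : ℤ) = m * Nat.gcdA m n + n * Nat.gcdB m n :=
    Nat.gcd_eq_gcd_ab m n
  set z : ℤ := (m : ℤ) * Nat.gcdA m n * k with hz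
  have hmn : (0 : ℤ) < (m : ℤ) * n := by positivity
  refine ⟨(z % ((m : ℤ) * n)).toNat, ?_, ?_⟩
  · have ht : (((z % ((m : ℤ) * n)).toNat : ℤ)) = z % ((m : ℤ) * n) :=
      Int.toNat_of_nonneg (Int.emod_nonneg z (ne_of_gt hmn))
    have : ((((z % ((m : ℤ) * n)).toNat % m : ℕ) : ℤ)) = 0 := by
      push_cast
      rw [ht, Int.emod_emod_of_dvd _ ⟨(n : ℤ), rfl⟩]
      simpa [hz, mul_assoc] using Int.mul_emod_right (m : ℤ) (Nat.gcdA m n * k)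
    exact_mod_cast this
  · have ht : (((z % ((m : ℤ) * n)).toNat : ℤ)) = z % ((m : ℤ) * n) :=
      Int.toNat_of_nonneg (Int.emod_nonneg z (ne_of_gt hmn))
    have hcz : (c : ℤ) = z + (n : ℤ) * (Nat.gcdB m n * k) := by
      have : (c : ℤ) = (Nat.gcd m n : ℤ) * k := by exact_mod_cast congrArg (Nat.cast : ℕ → ℤ) hk
      rw [this, hg]; ring
    have : ((((z % ((m : ℤ) * n)).toNat % n : ℕ) : ℤ)) = (c : ℤ) := by
      push_cast
      rw [ht, Int.emod_emod_of_dvd _ ⟨(m : ℤ), mul_comm _ _⟩]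
      have h2 : z % (n : ℤ) = (c : ℤ) % n := by rw [hcz, Int.add_mul_emod_self_left]
      rw [h2, Int.emod_eq_of_lt (by positivity) (by exact_mod_cast hc)]
    exact_mod_cast this

/-- A is an m×n rectangular circulant: entries are invariant under simultaneous
cyclic shift of the row index mod m and the column index mod n. -/
def IsRectCirculant {m n : ℕ} [NeZero m] [NeZero n] (A : Fin m → Fin n → ℝ) : Prop :=
  ∀ (i : Fin m) (j : Fin n) (t : ℕ), A (i + Fin.ofNat m t) (j + Fin.ofNat n t) = A i j

/-- A rectangular m×n circulant is d-periodic for d = gcd(m, n): shifting a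
column index by a multiple of d (mod n), or a row index by a multiple of d
(mod m), does not change the entry. -/
theorem rectCirculant_periodic {m n : ℕ} [NeZero m] [NeZero n]
    (A : Fin m → Fin n → ℝ) (hA : IsRectCirculant A) (d : ℕ) (hd : d = Nat.gcd m n) :
    (∀ (i : Fin m) (j s : Fin n), d ∣ ((s - j : Fin n) : ℕ) → A i j = A i s) ∧
      (∀ (j s : Fin m) (i : Fin n), d ∣ ((s - j : Fin m) : ℕ) → A j i = A s i) := by
  constructor
  · intro i j s h
    obtain ⟨t, ht1, ht2⟩ := rectCirculant_key m n ((s - j : Fin n) : ℕ)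
      (hd ▸ h) (s - j).isLt
    have e1 : Fin.ofNat m t = 0 := by
      ext; rw [Fin.val_ofNat, ht1, Fin.val_zero]
    have e2 : Fin.ofNat n t = s - j := by
      ext; rw [Fin.val_ofNat, ht2]
    have := hA i j t
    rw [e1, e2, add_zero] at this
    rw [← this]
    congr 1
    abel
  · intro j s i h
    obtain ⟨t, ht1, ht2⟩ := rectCirculant_key n m ((s - j : Fin m) : ℕ)
      (hd.trans (Nat.gcd_comm m n) ▸ h) (s - j).isLt
    have e1 : Fin.ofNat n t = 0 := by
      ext; rw [Fin.val_ofNat, ht1, Fin.val_zero]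
    have e2 : Fin.ofNat m t = s - j := by
      ext; rw [Fin.val_ofNat, ht2]
    have := hA j i t
    rw [e1, e2, add_zero] at this
    rw [← this]
    congr 1
    abel
end

section
/- Let y be a scaled solution of the chain system ⊕_{i∈T₁} y_i = ... = ⊕_{i∈T_m} y_i with T₁∪...∪T_m = {1,...,n}, and suppose 0 < y_i < 1 for some i. Then y is not extremal: y can be written as the componentwise maximum of finitely many solutions of the system, each different from y. -/
open scoped NNReal

/-- y solves the chain system ⊕_{i∈T₁} y_i = ⊕_{i∈T₂} y_i = ... = ⊕_{i∈T_m} y_i. -/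
def SolvesChain {n m : ℕ} (T : Fin m → Finset (Fin n)) (y : Fin n → ℝ≥0) : Prop :=
  ∀ l l' : Fin m, (T l).sup y = (T l').sup y

/-- A scaled solution of the chain system having a component strictly between 0
and 1 is not extremal: it is the componentwise maximum of finitely many
solutions, each different from it. -/
theorem chain_solution_not_extremal {n m : ℕ} (T : Fin m → Finset (Fin n))
    (hT : ∀ i : Fin n, ∃ l : Fin m, i ∈ T l)
    (y : Fin n → ℝ≥0) (hy : SolvesChain T y)
    (hscaled : Finset.univ.sup y = 1)
    (hmid : ∃ i, 0 < y i ∧ y i < 1) :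
    ∃ (k : ℕ) (v : Fin k → (Fin n → ℝ≥0)), 0 < k ∧
      (∀ t, SolvesChain T (v t)) ∧ (∀ t, v t ≠ y) ∧
      (∀ i, y i = Finset.univ.sup (fun t => v t i)) := by
  classical
  obtain ⟨i0, hi0pos, hi0lt⟩ := hmid
  -- every T l has an element where y equals 1
  have hTl : ∀ l, ∃ j ∈ T l, y j = 1 := by
    have huniv : (Finset.univ : Finset (Fin n)).Nonempty := ⟨i0, Finset.mem_univ i0⟩
    obtain ⟨j0, -, hj0⟩ := Finset.exists_mem_eq_sup Finset.univ huniv y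
    rw [hscaled] at hj0
    obtain ⟨l0, hl0⟩ := hT j0
    have hsl0 : (T l0).sup y = 1 := by
      apply le_antisymm
      · rw [← hscaled]; exact Finset.sup_mono (Finset.subset_univ _)
      · rw [hj0]; exact Finset.le_sup hl0
    intro l
    have hsl : (T l).sup y = 1 := (hy l l0).trans hsl0
    have hne : (T l).Nonempty := by
      rcases (T l).eq_empty_or_nonempty with h | h
      · rw [h] at hsl; simp at hsl
      · exact h
    obtain ⟨j, hj, hje⟩ := Finset.exists_mem_eq_sup (T l) hne y
    exact ⟨j, hj, by rw [← hje, hsl]⟩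
  -- there is an index where y = 1
  obtain ⟨l0, -⟩ := hT i0
  obtain ⟨j1, -, hj1⟩ := hTl l0
  set v0 : Fin n → ℝ≥0 := fun i => if y i = 1 then 1 else 0 with hv0
  set v1 : Fin n → Fin n → ℝ≥0 := fun k i => if y i = 1 ∨ i = k then y k else 0 with hv1
  refine ⟨n + 1, Fin.cons v0 v1, Nat.succ_pos n, ?_, ?_, ?_⟩
  · -- each is a solution
    intro t
    refine Fin.cases ?_ ?_ t
    · -- v0
      intro l l'
      have key : ∀ l, (T l).sup v0 = 1 := by
        intro l
        apply le_antisymm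
        · apply Finset.sup_le
          intro j _
          simp only [hv0]
          split <;> simp
        · obtain ⟨j, hj, hje⟩ := hTl l
          have : v0 j = 1 := by simp [hv0, hje]
          rw [← this]
          exact Finset.le_sup hj
      simp [key]
    · -- v1 k
      intro k l l'
      have key : ∀ l, (T l).sup (v1 k) = y k := by
        intro l
        apply le_antisymm
        · apply Finset.sup_le
          intro j _
          simp only [hv1]
          split <;> simp
        · obtain ⟨j, hj, hje⟩ := hTl l
          have : v1 k j = y k := by simp [hv1, hje]
          rw [← this]
          exact Finset.le_sup hj
      simp [key]
  · -- each differs from y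
    intro t
    refine Fin.cases ?_ ?_ t
    · simp only [Fin.cons_zero]
      intro h
      have : v0 i0 = y i0 := by rw [h]
      simp only [hv0, if_neg (ne_of_lt hi0lt)] at this
      exact absurd this.symm (ne_of_gt hi0pos)
    · intro k
      simp only [Fin.cons_succ]
      intro h
      by_cases hk : y k = 1
      · have : v1 k i0 = y i0 := by rw [h]
        have hne : ¬ (y i0 = 1 ∨ i0 = k) := by
          push_neg
          refine ⟨ne_of_lt hi0lt, ?_⟩
          intro he; rw [he, hk] at hi0lt; exact lt_irrefl _ hi0lt
        simp only [hv1, if_neg hne] at this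
        exact absurd this.symm (ne_of_gt hi0pos)
      · have : v1 k j1 = y j1 := by rw [h]
        simp only [hv1, if_pos (Or.inl hj1), hj1] at this
        exact hk this
  · -- componentwise sup recovers y
    intro i
    apply le_antisymm
    · have : v1 i i = y i := by simp [hv1]
      rw [← this]
      have := Finset.le_sup
        (f := fun t : Fin (n+1) => (Fin.cons v0 v1 : Fin (n+1) → Fin n → ℝ≥0) t i)
        (Finset.mem_univ (Fin.succ i))
      simpa using this
    · apply Finset.sup_le
      intro t _
      refine Fin.cases ?_ ?_ t
      · simp only [Fin.cons_zero, hv0]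
        split
        · next h => rw [h]
        · exact zero_le
      · intro k
        simp only [Fin.cons_succ, hv1]
        split
        · next h =>
          rcases h with h1 | h2
          · rw [h1]
            rw [← hscaled]
            exact Finset.le_sup (Finset.mem_univ k)
          · rw [h2]
        · exact zero_le
end

section
/- Let the sets T₁, ..., T_m partition {1,...,n} (pairwise disjoint with union everything). Then every vector of the form v^S = ⊕_{i∈S} e^i, where S contains exactly one index from each T_l, is a solution of the chain system ⊕_{i∈T₁} y_i = ... = ⊕_{i∈T_m} y_i, and every solution y of the system is a max-linear combination of such vectors v^S with nonnegative coefficients. -/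
open scoped NNReal

open Classical in
/-- The 0-1 vector v^S = ⊕_{l} e^{S l} associated with a choice function S. -/
noncomputable def chainChoiceVec {n m : ℕ} (S : Fin m → Fin n) : Fin n → ℝ≥0 :=
  fun i => if ∃ l : Fin m, S l = i then 1 else 0

/-- When the sets T₁, ..., T_m partition {1, ..., n}, every vector v^S = ⊕ e^i
over a transversal S (one index from each T_l) solves the chain system, and
every solution of the chain system is a max-linear combination of such vectors
with nonnegative coefficients. -/
theorem chain_extremals_partition {n m : ℕ} (T : Fin m → Finset (Fin n))
    (hdisj : ∀ l l' : Fin m, l ≠ l' → Disjoint (T l) (T l'))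
    (hcover : ∀ i : Fin n, ∃ l : Fin m, i ∈ T l) :
    (∀ S : Fin m → Fin n, (∀ l, S l ∈ T l) → SolvesChain T (chainChoiceVec S)) ∧
      (∀ y : Fin n → ℝ≥0, SolvesChain T y →
        ∃ (k : ℕ) (S : Fin k → Fin m → Fin n) (α : Fin k → ℝ≥0),
          (∀ t l, S t l ∈ T l) ∧
          (∀ i, y i = Finset.univ.sup (fun t => α t * chainChoiceVec (S t) i))) := by
  classical
  constructor
  · intro S hS l l'
    have key : ∀ l : Fin m, (T l).sup (chainChoiceVec S) = 1 := by
      intro l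
      apply le_antisymm
      · apply Finset.sup_le
        intro i _
        unfold chainChoiceVec
        split <;> simp
      · have h1 : chainChoiceVec S (S l) = 1 := by
          unfold chainChoiceVec
          rw [if_pos ⟨l, rfl⟩]
        calc (1 : ℝ≥0) = chainChoiceVec S (S l) := h1.symm
          _ ≤ (T l).sup (chainChoiceVec S) := Finset.le_sup (hS l)
    rw [key l, key l']
  · intro y hy
    choose cl hcl using hcover
    by_cases hne : ∀ l, (T l).Nonempty
    · choose mx hmem heq using fun l => Finset.exists_mem_eq_sup (T l) (hne l) y
      refine ⟨n, fun t l => if l = cl t then t else mx l, y, ?_, ?_⟩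
      · intro t l
        by_cases h : l = cl t
        · simp [h, hcl]
        · simp [h, hmem]
      · intro i
        apply le_antisymm
        · have h1 : chainChoiceVec (fun l => if l = cl i then i else mx l) i = 1 := by
            unfold chainChoiceVec
            rw [if_pos ⟨cl i, by simp⟩]
          calc y i = y i * chainChoiceVec (fun l => if l = cl i then i else mx l) i := by
                rw [h1, mul_one]
            _ ≤ _ := Finset.le_sup (f := fun t => y t * chainChoiceVec (fun l => if l = cl t then t else mx l) i) (Finset.mem_univ i)
        · apply Finset.sup_le
          intro t _
          unfold chainChoiceVec
          split
          · rename_i h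
            obtain ⟨l, hl⟩ := h
            replace hl : (if l = cl t then t else mx l) = i := hl
            by_cases hlt : l = cl t
            · rw [if_pos hlt] at hl
              subst hl
              simp
            · rw [if_neg hlt] at hl
              subst hl
              rw [mul_one]
              calc y t ≤ (T (cl t)).sup y := Finset.le_sup (hcl t)
                _ = (T l).sup y := hy _ _
                _ = y (mx l) := heq l
          · simp
    · push_neg at hne
      obtain ⟨l₀, hl₀⟩ := hne
      have hy0 : ∀ i, y i = 0 := by
        intro i
        have h1 : y i ≤ (T (cl i)).sup y := Finset.le_sup (hcl i)
        rw [hy (cl i) l₀] at h1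
        have : (T l₀).sup y = 0 := by
          rw [hl₀]; rfl
        rw [this] at h1
        exact le_antisymm h1 zero_le
      exact ⟨0, Fin.elim0, Fin.elim0, fun t => t.elim0, fun i => by simp [hy0 i]⟩
end
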